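/- arXiv:2107.04400 — 2 statements merged into one kernel-verified Lean document; each statement's English description precedes it below -/
import Mathlib

section
/- Let X be a bounded domain in ℝⁿ with Green function G_X, let η > 0, x ∈ X with dist(x, ∂X) ≥ η, let π(x) ∈ ∂X be a closest boundary point, and let y₀ = (x + π(x))/2. Then there exists ε₀ ∈ (0,1), depending only on η and n, such that Γ(x − π(x)) ≤ ε₀·Γ(x − y₀), where Γ is the fundamental solution of the Laplacian; and consequently, if a barrier ω at π(x) is bounded above by M on X̄, then G_X(x, y₀) ≥ ((1 − ε₀)/2)·Γ(x − y₀). -/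
open Metric

noncomputable section

/-- The Laplacian on `ℝⁿ` as the sum of second derivatives in coordinate directions. -/
def lapE {n : ℕ} (φ : EuclideanSpace ℝ (Fin n) → ℝ) (x : EuclideanSpace ℝ (Fin n)) : ℝ :=
  ∑ i : Fin n, fderiv ℝ (fun y => fderiv ℝ φ y (EuclideanSpace.single i 1)) x
    (EuclideanSpace.single i 1)

/-- The fundamental solution of the Laplacian in `ℝⁿ` (up to a positive dimensional
normalizing constant), `Γ(x) = |x|^{2−n}`. -/
def fs {n : ℕ} (x : EuclideanSpace ℝ (Fin n)) : ℝ := ‖x‖ ^ ((2 : ℝ) - n)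

/-!
Since `Γ(v) = ‖v‖^{2-n}` is homogeneous and `x - π(x) = 2 (x - y₀)`, one has
`Γ(x - π(x)) = ε₀ Γ(x - y₀)` with `ε₀ = 2^{2-n} < 1`. On `∂X` the harmonic corrector satisfies
`H(y) = Γ(x - y) ≤ Γ(x - π(x))`, because `π(x)` is a closest boundary point and `Γ` is radially
decreasing; the weak maximum principle propagates this bound to `y₀ ∈ X`, so
`Γ(x - y₀) - H(y₀) ≥ (1 - ε₀) Γ(x - y₀)`.
-/

open Filter Set
open scoped Topology RealInnerProductSpace

theorem IsLocalMax.deriv_deriv_nonpos {f : ℝ → ℝ} {a : ℝ} (h : IsLocalMax f a)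
    (hc : ContinuousAt f a) : deriv (deriv f) a ≤ 0 := by
  by_contra! hpos
  have hmin := isLocalMin_of_deriv_deriv_pos hpos h.deriv_eq_zero hc
  have hconst : f =ᶠ[𝓝 a] fun _ => f a := (hmin.and h).mono fun _ hx => le_antisymm hx.2 hx.1
  have hderiv : deriv f =ᶠ[𝓝 a] fun _ => 0 :=
    hconst.eventuallyEq_nhds.mono fun _ hx => by rw [hx.deriv_eq, deriv_const]
  rw [hderiv.deriv_eq, deriv_const] at hpos
  exact hpos.false

section SecondDirectionalDerivative

variable {E F : Type*} [NormedAddCommGroup E] [NormedSpace ℝ E]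
  [NormedAddCommGroup F] [NormedSpace ℝ F]

theorem DifferentiableAt.hasDerivAt_comp_add_smul {f : E → F} {z e : E} {t : ℝ}
    (hf : DifferentiableAt ℝ f (z + t • e)) :
    HasDerivAt (fun s : ℝ => f (z + s • e)) (fderiv ℝ f (z + t • e) e) t :=
  hf.hasFDerivAt.comp_hasDerivAt t (by simpa using ((hasDerivAt_id t).smul_const e).const_add z)

theorem ContDiffAt.differentiableAt_fderiv_apply {f : E → F} {z : E} (e : E)
    (hf : ContDiffAt ℝ 2 f z) : DifferentiableAt ℝ (fun y => fderiv ℝ f y e) z :=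
  ((hf.fderiv_right (m := 1) (by norm_num)).differentiableAt (by norm_num)).clm_apply
    (differentiableAt_const e)

theorem IsLocalMax.fderiv_fderiv_apply_nonpos {v : E → ℝ} {z : E} (e : E) (h : IsLocalMax v z)
    (hv : ContDiffAt ℝ 2 v z) : fderiv ℝ (fun y => fderiv ℝ v y e) z e ≤ 0 := by
  have hline : Tendsto (fun s : ℝ => z + s • e) (𝓝 0) (𝓝 z) := by
    have hcont : Continuous fun s : ℝ => z + s • e := by fun_prop
    simpa using hcont.tendsto 0
  have hmax : IsLocalMax (fun s : ℝ => v (z + s • e)) 0 := by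
    simpa [IsLocalMax, IsMaxFilter] using hline.eventually h
  have hderiv : deriv (fun s : ℝ => v (z + s • e)) =ᶠ[𝓝 0] fun s => fderiv ℝ v (z + s • e) e :=
    (hline.eventually (hv.eventually (by norm_num))).mono fun _ hs =>
      (hs.differentiableAt (by norm_num)).hasDerivAt_comp_add_smul.deriv
  have hsecond : HasDerivAt (fun s : ℝ => fderiv ℝ v (z + s • e) e)
      (fderiv ℝ (fun y => fderiv ℝ v y e) z e) 0 := by
    simpa using DifferentiableAt.hasDerivAt_comp_add_smul (f := fun y => fderiv ℝ v y e) (t := 0)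
      (by simpa using hv.differentiableAt_fderiv_apply e)
  simpa [hderiv.deriv_eq, hsecond.deriv] using hmax.deriv_deriv_nonpos
    (by simpa [ContinuousAt, Function.comp_def] using hv.continuousAt.tendsto.comp hline)

end SecondDirectionalDerivative

theorem fderiv_fderiv_apply_add_mul_norm_sq {E : Type*} [NormedAddCommGroup E]
    [InnerProductSpace ℝ E] {u : E → ℝ} {z : E} (hu : ContDiffAt ℝ 2 u z) (ε : ℝ) (e : E) :
    fderiv ℝ (fun y => fderiv ℝ (fun w => u w + ε * ‖w‖ ^ 2) y e) z e =
      fderiv ℝ (fun y => fderiv ℝ u y e) z e + 2 * ε * ‖e‖ ^ 2 := by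
  have hfirst : (fun y => fderiv ℝ (fun w => u w + ε * ‖w‖ ^ 2) y e) =ᶠ[𝓝 z]
      fun y => fderiv ℝ u y e + (2 * ε) * ⟪e, y⟫ := by
    refine (hu.eventually (by norm_num)).mono fun y hy => ?_
    have hsq := ((hasStrictFDerivAt_norm_sq y).hasFDerivAt).const_mul ε
    dsimp only
    rw [((hy.differentiableAt (by norm_num)).hasFDerivAt.fun_add hsq).fderiv]
    simp only [add_apply, smul_apply, coe_innerSL_apply, nsmul_eq_mul, Nat.cast_ofNat, smul_eq_mul,
      real_inner_comm y e, add_right_inj]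
    ring
  have hlin : HasFDerivAt (fun y : E => (2 * ε) * ⟪e, y⟫) ((2 * ε) • innerSL ℝ e) z :=
    ((innerSL ℝ e).hasFDerivAt).const_mul (2 * ε)
  rw [hfirst.fderiv_eq, ((hu.differentiableAt_fderiv_apply e).hasFDerivAt.fun_add hlin).fderiv]
  simp

section MaximumPrinciple

variable {n : ℕ} {X : Set (EuclideanSpace ℝ (Fin n))}

theorem lapE_add_mul_norm_sq {u : EuclideanSpace ℝ (Fin n) → ℝ} {z : EuclideanSpace ℝ (Fin n)}
    (hu : ContDiffAt ℝ 2 u z) (ε : ℝ) :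
    lapE (fun w => u w + ε * ‖w‖ ^ 2) z = lapE u z + 2 * n * ε := by
  simp only [lapE, fderiv_fderiv_apply_add_mul_norm_sq hu, Finset.sum_add_distrib]
  simp only [PiLp.norm_single, norm_one, one_pow, mul_one, Finset.sum_const, Finset.card_univ,
    Fintype.card_fin, nsmul_eq_mul, add_right_inj]
  ring

theorem IsLocalMax.lapE_nonpos {v : EuclideanSpace ℝ (Fin n) → ℝ} {z : EuclideanSpace ℝ (Fin n)}
    (h : IsLocalMax v z) (hv : ContDiffAt ℝ 2 v z) : lapE v z ≤ 0 :=
  Finset.sum_nonpos fun _ _ => h.fderiv_fderiv_apply_nonpos _ hv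

theorem exists_mem_frontier_le_of_lapE_pos {v : EuclideanSpace ℝ (Fin n) → ℝ} (hXo : IsOpen X)
    (hXb : Bornology.IsBounded X) (hc : ContinuousOn v (closure X)) (hd : ContDiffOn ℝ 2 v X)
    (hl : ∀ y ∈ X, 0 < lapE v y) {w : EuclideanSpace ℝ (Fin n)} (hw : w ∈ closure X) :
    ∃ z ∈ frontier X, v w ≤ v z := by
  obtain ⟨z, hz, hmax⟩ := hXb.isCompact_closure.exists_isMaxOn ⟨w, hw⟩ hc
  have hzX : z ∉ X := fun hzX =>
    have hloc : IsLocalMax v z :=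
      mem_of_superset (hXo.mem_nhds hzX) fun y hy => hmax (subset_closure hy)
    ((hl z hzX).trans_le (hloc.lapE_nonpos (hd.contDiffAt (hXo.mem_nhds hzX)))).false
  exact ⟨z, ⟨hz, by rwa [hXo.interior_eq]⟩, hmax hw⟩

/-- Apply the strict version to `u + ε ‖·‖²`, whose Laplacian is `Δu + 2nε > 0`, and let `ε → 0`. -/
theorem le_of_lapE_nonneg_of_le_on_frontier (hn : 0 < n) {u : EuclideanSpace ℝ (Fin n) → ℝ}
    {c : ℝ} (hXo : IsOpen X) (hXb : Bornology.IsBounded X) (hc : ContinuousOn u (closure X))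
    (hd : ContDiffOn ℝ 2 u X) (hl : ∀ y ∈ X, 0 ≤ lapE u y) (hfr : ∀ y ∈ frontier X, u y ≤ c)
    {w : EuclideanSpace ℝ (Fin n)} (hw : w ∈ closure X) : u w ≤ c := by
  obtain ⟨r, hr, hXr⟩ := hXb.closure.subset_closedBall_lt 0 0
  refine le_of_forall_pos_le_add fun δ hδ => ?_
  set ε := δ / r ^ 2
  have hε : 0 < ε := by positivity
  obtain ⟨z, hz, hwz⟩ := exists_mem_frontier_le_of_lapE_pos (v := fun y => u y + ε * ‖y‖ ^ 2)
    hXo hXb (hc.add (by fun_prop)) (hd.add (contDiffOn_const.mul (contDiff_norm_sq ℝ).contDiffOn))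
    (fun y hy => by
      rw [lapE_add_mul_norm_sq (hd.contDiffAt (hXo.mem_nhds hy))]
      have : (0 : ℝ) < n := by exact_mod_cast hn
      have := hl y hy
      positivity) hw
  have hzr : ‖z‖ ≤ r := by simpa using hXr (frontier_subset_closure hz)
  calc u w ≤ u w + ε * ‖w‖ ^ 2 := by simp only [le_add_iff_nonneg_right]; positivity
    _ ≤ u z + ε * ‖z‖ ^ 2 := hwz
    _ ≤ c + ε * r ^ 2 := by gcongr; exact hfr z hz
    _ = c + δ := by rw [div_mul_cancel₀ _ (by positivity)]

end MaximumPrinciple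

theorem ball_infDist_frontier_subset {E : Type*} [NormedAddCommGroup E] [NormedSpace ℝ E]
    [FiniteDimensional ℝ E] {s : Set E} {x : E} (hx : x ∈ s) :
    ball x (infDist x (frontier s)) ⊆ s := by
  rcases eq_or_ne s univ with rfl | hs
  · exact subset_univ _
  obtain ⟨y, hy, hxy⟩ := exists_mem_frontier_infDist_compl_eq_dist hx hs
  exact (ball_subset_ball (hxy ▸ infDist_le_dist_of_mem hy)).trans ball_infDist_compl_subset

section FundamentalSolution

variable {n : ℕ}

theorem fs_smul {c : ℝ} (hc : 0 ≤ c) (v : EuclideanSpace ℝ (Fin n)) :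
    fs (c • v) = c ^ ((2 : ℝ) - n) * fs v := by
  rw [fs, fs, norm_smul, Real.norm_of_nonneg hc, Real.mul_rpow hc (norm_nonneg v)]

theorem fs_sub_eq_mul_fs_sub_midpoint (x y : EuclideanSpace ℝ (Fin n)) :
    fs (x - y) = 2 ^ ((2 : ℝ) - n) * fs (x - midpoint ℝ x y) := by
  rw [← fs_smul zero_le_two, left_sub_midpoint, smul_smul, invOf_eq_inv,
    mul_inv_cancel₀ two_ne_zero, one_smul]

theorem fs_le_fs_of_norm_le (hn : 2 ≤ n) {v w : EuclideanSpace ℝ (Fin n)} (hv : 0 < ‖v‖)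
    (h : ‖v‖ ≤ ‖w‖) : fs w ≤ fs v :=
  Real.rpow_le_rpow_of_nonpos hv h (by rw [sub_nonpos]; exact_mod_cast hn)

end FundamentalSolution

theorem green_function_interior_lower_bound_general (n : ℕ) (hn : 3 ≤ n) (η : ℝ) :
    ∃ ε₀ : ℝ, 0 < ε₀ ∧ ε₀ < 1 ∧
      ∀ (X : Set (EuclideanSpace ℝ (Fin n))) (x πx : EuclideanSpace ℝ (Fin n)),
        IsOpen X → Bornology.IsBounded X → X.Nonempty → x ∈ X →
        η ≤ Metric.infDist x (frontier X) →
        πx ∈ frontier X → dist x πx = Metric.infDist x (frontier X) →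
        fs (x - πx) ≤ ε₀ * fs (x - midpoint ℝ x πx) ∧
        ∀ (H ω : EuclideanSpace ℝ (Fin n) → ℝ) (M : ℝ), 0 < M →
          ContinuousOn H (closure X) → ContDiffOn ℝ 2 H X →
          (∀ y ∈ X, lapE H y = 0) → (∀ y ∈ frontier X, H y = fs (x - y)) →
          ContinuousOn ω (closure X) → ContDiffOn ℝ 2 ω X →
          (∀ y ∈ X, lapE ω y ≤ 0) → (∀ y ∈ closure X, 0 ≤ ω y) → ω πx = 0 →
          (∀ y ∈ closure X, ω y ≤ M) →
          (1 - ε₀) / 2 * fs (x - midpoint ℝ x πx) ≤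
            fs (x - midpoint ℝ x πx) - H (midpoint ℝ x πx) := by
  have hexp : (2 : ℝ) - n < 0 := by
    have : (3 : ℝ) ≤ n := by exact_mod_cast hn
    linarith
  have hε₀ : (2 : ℝ) ^ ((2 : ℝ) - n) < 1 := Real.rpow_lt_one_of_one_lt_of_neg one_lt_two hexp
  refine ⟨2 ^ ((2 : ℝ) - n), by positivity, hε₀, ?_⟩
  intro X x πx hXo hXb _ hx _ hπx hdist
  refine ⟨(fs_sub_eq_mul_fs_sub_midpoint x πx).le, ?_⟩
  intro H _ _ _ hHc hHd hHlap hHfr _ _ _ _ _ _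
  have hxπx : 0 < dist x πx := dist_pos.2 (ne_of_mem_of_not_mem hx (hXo.frontier_eq ▸ hπx).2)
  have hy₀ : midpoint ℝ x πx ∈ X := ball_infDist_frontier_subset hx <| by
    rw [mem_ball, dist_midpoint_left, ← hdist]
    norm_num
    linarith
  have hH : H (midpoint ℝ x πx) ≤ fs (x - πx) :=
    le_of_lapE_nonneg_of_le_on_frontier (by omega) hXo hXb hHc hHd (fun y hy => (hHlap y hy).ge)
      (fun y hy => (hHfr y hy).trans_le <| fs_le_fs_of_norm_le (by omega)
        (by rwa [← dist_eq_norm]) (by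
          rw [← dist_eq_norm, ← dist_eq_norm, hdist]
          exact infDist_le_dist_of_mem hy))
      (subset_closure hy₀)
  rw [fs_sub_eq_mul_fs_sub_midpoint] at hH
  have hΓ : 0 ≤ fs (x - midpoint ℝ x πx) := Real.rpow_nonneg (norm_nonneg _) _
  nlinarith [mul_nonneg (sub_nonneg.2 hε₀.le) hΓ]

/-- interior positivity of the Green function: if `x ∈ X` has
`dist(x,∂X) ≥ η`, `π(x)` is a closest boundary point and `y₀` the midpoint of `x` and `π(x)`,
then there is `ε₀ ∈ (0,1)`, depending only on `η` and `n`, with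
`Γ(x−π(x)) ≤ ε₀ Γ(x−y₀)`; and if a barrier `ω` at `π(x)` is bounded by `M`, then
`G_X(x,y₀) = Γ(x−y₀) − H_X(x,y₀) ≥ ((1−ε₀)/2) Γ(x−y₀)`. -/
theorem green_function_interior_lower_bound (n : ℕ) (hn : 3 ≤ n) (η : ℝ) (hη : 0 < η) :
    ∃ ε₀ : ℝ, 0 < ε₀ ∧ ε₀ < 1 ∧
      ∀ (X : Set (EuclideanSpace ℝ (Fin n))) (x πx : EuclideanSpace ℝ (Fin n)),
        IsOpen X → Bornology.IsBounded X → X.Nonempty → x ∈ X →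
        η ≤ Metric.infDist x (frontier X) →
        πx ∈ frontier X → dist x πx = Metric.infDist x (frontier X) →
        fs (x - πx) ≤ ε₀ * fs (x - midpoint ℝ x πx) ∧
        ∀ (H ω : EuclideanSpace ℝ (Fin n) → ℝ) (M : ℝ), 0 < M →
          ContinuousOn H (closure X) → ContDiffOn ℝ 2 H X →
          (∀ y ∈ X, lapE H y = 0) → (∀ y ∈ frontier X, H y = fs (x - y)) →
          ContinuousOn ω (closure X) → ContDiffOn ℝ 2 ω X →
          (∀ y ∈ X, lapE ω y ≤ 0) → (∀ y ∈ closure X, 0 ≤ ω y) → ω πx = 0 →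
          (∀ y ∈ closure X, ω y ≤ M) →
          (1 - ε₀) / 2 * fs (x - midpoint ℝ x πx) ≤
            fs (x - midpoint ℝ x πx) - H (midpoint ℝ x πx) :=
  green_function_interior_lower_bound_general n hn η
end
end

section
/- Let Y ⊂ ℂⁿ be a measurable set contained in a ball B_r centered at the origin and containing a Euclidean ball of fixed radius around the origin, and let F ⊂ Y be measurable with |F| ≥ γ|Y|, γ > 0. Then there exists a constant a > 0, depending only on n and r, and a unit vector Θ ∈ ℂⁿ such that the planar sections satisfy |F_Θ| ≥ a·γ·|Y_Θ|, where F_Θ = { w ∈ ℂ : wΘ ∈ F } and |·| is 2-dimensional Lebesgue measure. -/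
/-!
For `n ≥ 2`, integrate the slices `F_x = {w | w • x ∈ F}` over the unit ball `B` of `ℂⁿ`. By
Tonelli on `{(w, x) | w • x ∈ F}`, `∫_B |F_x| dx` is at least a constant times `|F|`: for
`r < |w| < 3r` the whole dilate `w⁻¹ • F` lies in `B` and has measure `≥ (3r)^{-2n} |F|`. On the
other hand `|F_x| = |x|⁻² |F_{x/|x|}|`, and `|x|⁻²` is integrable on `B` because the real dimension
exceeds `2`; so some unit direction `Θ` has `|F_Θ| ≳ |F|`. For `n = 1`, `w ↦ w • Θ` is an isometry
`ℂ ≃ ℂ¹` and `|F_Θ| = |F|`. Finally `|F| ≥ γ |Y| ≥ γ |B_c|` while `|Y_Θ| ≤ |B_r(ℂ)|`.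
-/

open MeasureTheory Metric

noncomputable section

instance {n : ℕ} : MeasurableSpace (EuclideanSpace ℂ (Fin n)) := borel _
instance {n : ℕ} : BorelSpace (EuclideanSpace ℂ (Fin n)) := ⟨rfl⟩
instance {n : ℕ} : InnerProductSpace ℝ (EuclideanSpace ℂ (Fin n)) :=
  InnerProductSpace.rclikeToReal ℂ _

open Set Module
open scoped ENNReal

theorem LinearMap.det_restrictScalars_complex_smul_id {V : Type*} [AddCommGroup V] [Module ℝ V]
    [Module ℂ V] [IsScalarTower ℝ ℂ V] [FiniteDimensional ℝ V] (w : ℂ) :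
    ((w • LinearMap.id : V →ₗ[ℂ] V).restrictScalars ℝ).det = ‖w‖ ^ finrank ℝ V := by
  have : FiniteDimensional ℂ V := Module.Finite.of_restrictScalars_finite ℝ ℂ V
  rw [LinearMap.det_restrictScalars, LinearMap.det_smul, LinearMap.det_id, mul_one, map_pow,
    Algebra.norm_complex_apply, ← Module.finrank_mul_finrank ℝ ℂ V, Complex.finrank_real_complex,
    pow_mul, Complex.sq_norm]

theorem Complex.volume_preimage_smul_const {V : Type*} [NormedAddCommGroup V] [NormedSpace ℝ V]
    [Module ℂ V] [IsScalarTower ℝ ℂ V] (s : Set V) {x : V} (hx : x ≠ 0) :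
    volume ((fun w : ℂ => w • x) ⁻¹' s)
      = ENNReal.ofReal (‖x‖ ^ 2)⁻¹ * volume ((fun w : ℂ => w • (‖x‖⁻¹ • x)) ⁻¹' s) := by
  have hx' : ‖x‖ ≠ 0 := norm_ne_zero_iff.2 hx
  have hscale : (fun w : ℂ => w • x) ⁻¹' s
      = (‖x‖ • ·) ⁻¹' ((fun w : ℂ => w • (‖x‖⁻¹ • x)) ⁻¹' s) := by
    ext w
    simp only [mem_preimage, smul_assoc, smul_comm w, smul_inv_smul₀ hx']
  rw [hscale, Measure.addHaar_preimage_smul volume hx', Complex.finrank_real_complex,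
    abs_of_nonneg (by positivity)]

section HaarMeasure

variable {V : Type*} [NormedAddCommGroup V] [NormedSpace ℝ V] [FiniteDimensional ℝ V]
  [MeasurableSpace V] [BorelSpace V] (μ : Measure V) [μ.IsAddHaarMeasure]

theorem lintegral_ball_inv_norm_sq_lt_top (hV : 2 < finrank ℝ V) :
    ∫⁻ x in ball 0 1, ENNReal.ofReal (‖x‖ ^ 2)⁻¹ ∂μ < ∞ := by
  refine Integrable.lintegral_lt_top (integrableOn_ball_of_norm_le_rpow (C := 1) (α := 2)
    (by omega) (by exact_mod_cast hV) (ae_of_all _ fun x => ?_) (by fun_prop))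
  rw [Real.norm_of_nonneg (by positivity), one_mul, Real.rpow_neg (norm_nonneg x)]
  norm_cast

variable [NormedSpace ℂ V] [IsScalarTower ℝ ℂ V]

theorem MeasureTheory.Measure.addHaar_preimage_complex_smul {w : ℂ} (hw : w ≠ 0) (s : Set V) :
    μ ((w • ·) ⁻¹' s) = ENNReal.ofReal (‖w‖ ^ finrank ℝ V)⁻¹ * μ s := by
  have hdet := LinearMap.det_restrictScalars_complex_smul_id (V := V) w
  rw [← abs_of_nonneg (inv_nonneg.2 (pow_nonneg (norm_nonneg w) _)), ← hdet]
  exact μ.addHaar_preimage_linearMap (by rw [hdet]; positivity) s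

theorem le_setLIntegral_volume_preimage_smul_const {r : ℝ} {F : Set V} (hF : MeasurableSet F)
    (hFr : F ⊆ ball 0 r) :
    ENNReal.ofReal ((3 * r) ^ finrank ℝ V)⁻¹ * μ F * volume (ball (0 : ℂ) r)
      ≤ ∫⁻ x in ball 0 1, volume ((fun w : ℂ => w • x) ⁻¹' F) ∂μ := by
  set S := (fun p : ℂ × V => p.1 • p.2) ⁻¹' F
  have hS : MeasurableSet S := continuous_smul.measurable hF
  have hslice : ∀ w ∈ ball ((2 * r : ℝ) : ℂ) r,
      ENNReal.ofReal ((3 * r) ^ finrank ℝ V)⁻¹ * μ F ≤ μ.restrict (ball 0 1) ((w • ·) ⁻¹' F) := by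
    intro w hw
    rw [mem_ball, dist_eq_norm] at hw
    have hr : 0 < r := (norm_nonneg _).trans_lt hw
    have h2r : ‖((2 * r : ℝ) : ℂ)‖ = 2 * r := by
      rw [Complex.norm_real, Real.norm_of_nonneg (by positivity)]
    have hlow : r < ‖w‖ := by
      have := norm_sub_norm_le ((2 * r : ℝ) : ℂ) w
      rw [norm_sub_rev] at this
      linarith
    have hup : ‖w‖ < 3 * r := by
      have := norm_le_norm_add_norm_sub' w ((2 * r : ℝ) : ℂ)
      linarith
    have hsub : (w • ·) ⁻¹' F ⊆ ball 0 1 := fun x hx => by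
      have := hFr hx
      rw [mem_ball_zero_iff, norm_smul] at this
      rw [mem_ball_zero_iff]
      nlinarith [norm_nonneg x]
    have hw0 : 0 < ‖w‖ := hr.trans hlow
    rw [Measure.restrict_eq_self _ hsub, μ.addHaar_preimage_complex_smul (norm_pos_iff.1 hw0)]
    gcongr
  calc ENNReal.ofReal ((3 * r) ^ finrank ℝ V)⁻¹ * μ F * volume (ball (0 : ℂ) r)
      = ∫⁻ _ in ball ((2 * r : ℝ) : ℂ) r, ENNReal.ofReal ((3 * r) ^ finrank ℝ V)⁻¹ * μ F := by
        rw [setLIntegral_const, Measure.addHaar_ball_center volume ((2 * r : ℝ) : ℂ)]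
    _ ≤ ∫⁻ w in ball ((2 * r : ℝ) : ℂ) r, μ.restrict (ball 0 1) ((w • ·) ⁻¹' F) :=
        setLIntegral_mono' measurableSet_ball hslice
    _ ≤ ∫⁻ w, μ.restrict (ball 0 1) ((w • ·) ⁻¹' F) := setLIntegral_le_lintegral _ _
    _ = (volume.prod (μ.restrict (ball 0 1))) S := (Measure.prod_apply hS).symm
    _ = ∫⁻ x in ball 0 1, volume ((fun w : ℂ => w • x) ⁻¹' F) ∂μ := Measure.prod_apply_symm hS

theorem setLIntegral_volume_preimage_smul_const_le [Nontrivial V] {F : Set V} {m : ℝ≥0∞}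
    (hm : ∀ Θ : V, ‖Θ‖ = 1 → volume ((fun w : ℂ => w • Θ) ⁻¹' F) ≤ m) :
    ∫⁻ x in ball 0 1, volume ((fun w : ℂ => w • x) ⁻¹' F) ∂μ
      ≤ m * ∫⁻ x in ball 0 1, ENNReal.ofReal (‖x‖ ^ 2)⁻¹ ∂μ := by
  rw [← lintegral_const_mul _ (by fun_prop)]
  refine lintegral_mono_ae ?_
  filter_upwards [ae_restrict_of_ae (compl_mem_ae_iff.2 (measure_singleton (0 : V)))] with x hx
  rw [Complex.volume_preimage_smul_const F hx, mul_comm]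
  gcongr
  exact hm _ (norm_smul_inv_norm hx)

theorem exists_pos_forall_exists_volume_preimage_smul_ge (hV : 2 < finrank ℝ V) {r : ℝ}
    (hr : 0 < r) :
    ∃ κ : ℝ, 0 < κ ∧ ∀ F : Set V, MeasurableSet F → F ⊆ ball 0 r →
      ∃ Θ : V, ‖Θ‖ = 1 ∧ ENNReal.ofReal κ * μ F ≤ volume ((fun w : ℂ => w • Θ) ⁻¹' F) := by
  have : Nontrivial V := Module.nontrivial_of_finrank_pos (R := ℝ) (by omega)
  set c₀ := ENNReal.ofReal ((3 * r) ^ finrank ℝ V)⁻¹ * volume (ball (0 : ℂ) r)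
  set I := ∫⁻ x in ball 0 1, ENNReal.ofReal (‖x‖ ^ 2)⁻¹ ∂μ
  have hc₀ : c₀ ≠ 0 :=
    mul_ne_zero (ENNReal.ofReal_pos.2 (by positivity)).ne' (measure_ball_pos _ _ hr).ne'
  obtain ⟨κ, hκ, hκI⟩ :=
    ENNReal.exists_nnreal_pos_mul_lt (lintegral_ball_inv_norm_sq_lt_top μ hV).ne hc₀
  refine ⟨κ, hκ, fun F hF hFr => ?_⟩
  by_contra! hsmall
  rw [ENNReal.ofReal_coe_nnreal] at hsmall
  have hF0 : μ F ≠ 0 := fun h => by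
    obtain ⟨Θ, hΘ⟩ := exists_norm_eq V zero_le_one
    simpa [h] using hsmall Θ hΘ
  have hFtop : μ F ≠ ∞ := ((measure_mono hFr).trans_lt measure_ball_lt_top).ne
  have hbound : c₀ * μ F ≤ κ * I * μ F :=
    calc c₀ * μ F = ENNReal.ofReal ((3 * r) ^ finrank ℝ V)⁻¹ * μ F * volume (ball (0 : ℂ) r) := by
          ring
      _ ≤ ∫⁻ x in ball 0 1, volume ((fun w : ℂ => w • x) ⁻¹' F) ∂μ :=
          le_setLIntegral_volume_preimage_smul_const μ hF hFr
      _ ≤ κ * μ F * I :=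
          setLIntegral_volume_preimage_smul_const_le μ fun Θ hΘ => (hsmall Θ hΘ).le
      _ = κ * I * μ F := by ring
  exact (hκI.trans_le ((ENNReal.mul_le_mul_iff_left hF0 hFtop).1 hbound)).false

end HaarMeasure

theorem volume_preimage_smul_eq_of_finrank_eq_one {V : Type*} [NormedAddCommGroup V]
    [InnerProductSpace ℝ V] [NormedSpace ℂ V] [IsScalarTower ℝ ℂ V] [FiniteDimensional ℝ V]
    [MeasurableSpace V] [BorelSpace V] (hV : finrank ℂ V = 1) {Θ : V} (hΘ : ‖Θ‖ = 1)
    (s : Set V) : volume ((fun w : ℂ => w • Θ) ⁻¹' s) = volume s := by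
  have hΘ0 : Θ ≠ 0 := norm_ne_zero_iff.1 (by rw [hΘ]; exact one_ne_zero)
  let e : ℂ ≃ₗᵢ[ℝ] V :=
    { LinearEquiv.ofBijective ((LinearMap.toSpanSingleton ℂ V Θ).restrictScalars ℝ)
        ⟨smul_left_injective ℂ hΘ0, (finrank_eq_one_iff_of_nonzero' Θ hΘ0).1 hV⟩ with
      norm_map' := fun w => by
        change ‖w • Θ‖ = ‖w‖
        rw [norm_smul, hΘ, mul_one] }
  exact e.measurePreserving.measure_preimage_emb e.toHomeomorph.measurableEmbedding s

theorem EuclideanSpace.exists_pos_forall_exists_volume_preimage_smul_ge {n : ℕ} (hn : 1 ≤ n)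
    {r : ℝ} (hr : 0 < r) :
    ∃ κ : ℝ, 0 < κ ∧ ∀ F : Set (EuclideanSpace ℂ (Fin n)), MeasurableSet F → F ⊆ ball 0 r →
      ∃ Θ : EuclideanSpace ℂ (Fin n), ‖Θ‖ = 1 ∧
        ENNReal.ofReal κ * volume F ≤ volume ((fun w : ℂ => w • Θ) ⁻¹' F) := by
  obtain rfl | hn2 := hn.eq_or_lt
  · refine ⟨1, one_pos, fun F _ _ => ⟨EuclideanSpace.single 0 1, by simp, ?_⟩⟩
    rw [ENNReal.ofReal_one, one_mul, volume_preimage_smul_eq_of_finrank_eq_one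
      (by simp) (by simp) F]
  · refine _root_.exists_pos_forall_exists_volume_preimage_smul_ge volume ?_ hr
    rw [← Module.finrank_mul_finrank ℝ ℂ, Complex.finrank_real_complex, finrank_euclideanSpace_fin]
    omega

/-- complex-line slicing: if `Y ⊆ B(0,r)` contains `B(0,c)` and `F ⊆ Y` has
`|F| ≥ γ|Y|`, then there is a direction `Θ`, `|Θ| = 1`, whose planar section satisfies
`|F_Θ| ≥ a γ |Y_Θ|` with `a > 0` depending only on `n`, `r` and `c`. -/
theorem complex_line_slicing (n : ℕ) (hn : 1 ≤ n) (r c : ℝ) (hr : 0 < r) (hc : 0 < c) :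
    ∃ a : ℝ, 0 < a ∧
      ∀ (Y F : Set (EuclideanSpace ℂ (Fin n))) (γ : ℝ),
        MeasurableSet Y → MeasurableSet F → F ⊆ Y →
        Y ⊆ ball 0 r → ball 0 c ⊆ Y → 0 < γ →
        ENNReal.ofReal γ * volume Y ≤ volume F →
        ∃ Θ : EuclideanSpace ℂ (Fin n), ‖Θ‖ = 1 ∧
          ENNReal.ofReal (a * γ) * volume { w : ℂ | w • Θ ∈ Y } ≤
            volume { w : ℂ | w • Θ ∈ F } := by
  obtain ⟨κ, hκ, hslice⟩ := EuclideanSpace.exists_pos_forall_exists_volume_preimage_smul_ge hn hr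
  set m := volume (ball (0 : EuclideanSpace ℂ (Fin n)) c) / volume (ball (0 : ℂ) r)
  have hm : m * volume (ball (0 : ℂ) r) = volume (ball (0 : EuclideanSpace ℂ (Fin n)) c) :=
    ENNReal.div_mul_cancel (measure_ball_pos _ _ hr).ne' measure_ball_lt_top.ne
  have hm0 : m ≠ 0 := ENNReal.div_ne_zero.2 ⟨(measure_ball_pos _ _ hc).ne', measure_ball_lt_top.ne⟩
  have hmtop : m ≠ ∞ := ENNReal.div_ne_top measure_ball_lt_top.ne (measure_ball_pos _ _ hr).ne'
  refine ⟨κ * m.toReal, mul_pos hκ (ENNReal.toReal_pos hm0 hmtop),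
    fun Y F γ _ hF hFY hYr hcY hγ hγF => ?_⟩
  obtain ⟨Θ, hΘ, hΘF⟩ := hslice F hF (hFY.trans hYr)
  have hYΘ : {w : ℂ | w • Θ ∈ Y} ⊆ ball 0 r := fun w hw => by
    simpa [norm_smul, hΘ] using hYr hw
  refine ⟨Θ, hΘ, ?_⟩
  calc ENNReal.ofReal (κ * m.toReal * γ) * volume {w : ℂ | w • Θ ∈ Y}
      ≤ ENNReal.ofReal (κ * m.toReal * γ) * volume (ball (0 : ℂ) r) := by gcongr
    _ = ENNReal.ofReal κ * (ENNReal.ofReal γ * volume (ball (0 : EuclideanSpace ℂ (Fin n)) c)) := by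
        rw [ENNReal.ofReal_mul (by positivity), ENNReal.ofReal_mul hκ.le,
          ENNReal.ofReal_toReal hmtop, ← hm]
        ring
    _ ≤ ENNReal.ofReal κ * volume F := by
        gcongr
        exact (mul_le_mul_right (measure_mono hcY) _).trans hγF
    _ ≤ volume {w : ℂ | w • Θ ∈ F} := hΘF
end
end
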